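/- Let q, θ : Ω → ℝ be measurable exponent functions with 1 < q_- := ess inf q ≤ ess sup q =: q_+ < ∞, ess sup θ < ∞, and q(x) − 1 ≤ θ(x) for a.e. x ∈ Ω (so that θ(x)/(q(x) − 1) ≥ 1 a.e.). Let u and u_n (n ∈ ℕ) be measurable functions from Ω to ℝ with |u|_{θ(·)} < ∞ and |u_n|_{θ(·)} < ∞ for all n, and suppose |u_n − u|_{θ(·)} → 0 as n → ∞. Then | |u_n|^{q(·)−2}u_n − |u|^{q(·)−2}u |_{θ(·)/(q(·)−1)} → 0 as n → ∞. -/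

import Mathlib

open MeasureTheory Filter Topology
open scoped ENNReal

/-- Luxemburg gauge `|u|_{p(·)}` (value `∞` if no admissible `μ > 0` exists). -/
noncomputable def luxNorm {α : Type*} [MeasurableSpace α] (μ : Measure α) (p u : α → ℝ) : ℝ≥0∞ :=
  sInf (ENNReal.ofReal '' {m : ℝ | 0 < m ∧ ∫⁻ x, ENNReal.ofReal (|u x / m| ^ p x) ∂μ ≤ 1})

/-- `|s|^{q−2}·s`, i.e. `|s|^{q−1}·sign(s)`, with value `0` at `s = 0`. -/
noncomputable def powMap (q s : ℝ) : ℝ := if s = 0 then 0 else |s| ^ (q - 1) * Real.sign s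

/-!
Write `φ_α(s) = |s|^α sign s`, so that the map is `u ↦ φ_{q-1}(u)`. Pointwise,
`|φ_α(a) - φ_α(b)|` is at most `2|a - b|^α` for `α ≤ 1` and at most
`α (|a| + |b|)^(α-1) |a - b|` for `α ≥ 1`; splitting according to whether `|a - b| ≤ ε|b|`
gives, for every `δ > 0`, a constant `C` with
`|φ_α(a) - φ_α(b)|^(θ/α) ≤ C |a - b|^θ + δ |b|^θ` uniformly in `β ≤ α ≤ θ ≤ Θ`.
Integrating, the modular of `φ(u_n) - φ(u)` for the exponent `θ/(q-1)` is at most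
`C ρ_θ(u_n - u) + δ ρ_θ(u)`. As the exponents are bounded, and bounded below by `q₋ - 1 > 0`,
convergence to `0` in the Luxemburg gauge is the same as convergence of the modular to `0`,
and `ρ_θ(u) < ∞`; letting `n → ∞` and then `δ → 0` concludes.
-/

noncomputable def signedRpow (α s : ℝ) : ℝ := |s| ^ α * Real.sign s

lemma powMap_eq_signedRpow (q s : ℝ) : powMap q s = signedRpow (q - 1) s := by
  by_cases hs : s = 0 <;> simp [powMap, signedRpow, hs]

lemma signedRpow_neg (α s : ℝ) : signedRpow α (-s) = -signedRpow α s := by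
  simp [signedRpow, Real.sign_neg]

lemma signedRpow_of_nonneg {α s : ℝ} (hα : α ≠ 0) (hs : 0 ≤ s) : signedRpow α s = s ^ α := by
  rcases hs.lt_or_eq with hs | rfl
  · simp [signedRpow, Real.sign_of_pos hs, abs_of_pos hs]
  · simp [signedRpow, Real.zero_rpow hα]

lemma abs_signedRpow_sub_le {α : ℝ} (hα : 0 < α) {F : ℝ → ℝ → ℝ → ℝ}
    (hF : ∀ x y d, F x y d = F y x d)
    (hsame : ∀ a b : ℝ, 0 ≤ b → b ≤ a → a ^ α - b ^ α ≤ F a b (a - b))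
    (hopp : ∀ a b : ℝ, 0 ≤ a → 0 ≤ b → a ^ α + b ^ α ≤ F a b (a + b)) (a b : ℝ) :
    |signedRpow α a - signedRpow α b| ≤ F |a| |b| |a - b| := by
  wlog hba : b ≤ a generalizing a b
  · rw [abs_sub_comm, abs_sub_comm a, hF]
    exact this b a (le_of_not_ge hba)
  have hsame' : ∀ x y : ℝ, 0 ≤ y → y ≤ x → |signedRpow α x - signedRpow α y| ≤ F x y (x - y) :=
    fun x y hy hyx => by
      rw [signedRpow_of_nonneg hα.ne' hy, signedRpow_of_nonneg hα.ne' (hy.trans hyx),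
        abs_of_nonneg (sub_nonneg.2 (Real.rpow_le_rpow hy hyx hα.le))]
      exact hsame x y hy hyx
  rcases le_total 0 b with hb | hb
  · rw [abs_of_nonneg hb, abs_of_nonneg (hb.trans hba), abs_of_nonneg (sub_nonneg.2 hba)]
    exact hsame' a b hb hba
  rcases le_total a 0 with ha | ha
  · have h := hsame' (-b) (-a) (neg_nonneg.2 ha) (neg_le_neg hba)
    rwa [signedRpow_neg, signedRpow_neg, neg_sub_neg, neg_sub_neg, ← abs_of_nonpos ha,
      ← abs_of_nonpos hb, ← abs_of_nonneg (sub_nonneg.2 hba), hF] at h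
  · have hb' : signedRpow α b = -(-b) ^ α := by
      rw [← signedRpow_of_nonneg hα.ne' (neg_nonneg.2 hb), signedRpow_neg, neg_neg]
    rw [signedRpow_of_nonneg hα.ne' ha, hb', abs_of_nonneg ha, abs_of_nonpos hb,
      abs_of_nonneg (sub_nonneg.2 hba), sub_neg_eq_add, sub_eq_add_neg,
      abs_of_nonneg (add_nonneg (Real.rpow_nonneg ha α) (Real.rpow_nonneg (neg_nonneg.2 hb) α))]
    exact hopp a (-b) ha (neg_nonneg.2 hb)

lemma abs_signedRpow_sub_le_of_le_one {α : ℝ} (h0 : 0 < α) (h1 : α ≤ 1) (a b : ℝ) :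
    |signedRpow α a - signedRpow α b| ≤ 2 * |a - b| ^ α := by
  refine abs_signedRpow_sub_le h0 (F := fun _ _ d => 2 * d ^ α) (fun _ _ _ => rfl)
    (fun a b hb hba => ?_) (fun a b ha hb => ?_) a b
  · have h := Real.rpow_add_le_add_rpow (sub_nonneg.2 hba) hb h0.le h1
    rw [sub_add_cancel] at h
    linarith [Real.rpow_nonneg (sub_nonneg.2 hba) α]
  · have ha' : a ^ α ≤ (a + b) ^ α := Real.rpow_le_rpow ha (le_add_of_nonneg_right hb) h0.le
    have hb' : b ^ α ≤ (a + b) ^ α := Real.rpow_le_rpow hb (le_add_of_nonneg_left ha) h0.le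
    linarith

lemma rpow_sub_rpow_le_mul_sub {α a b : ℝ} (hα : 1 ≤ α) (hb : 0 ≤ b) (hba : b ≤ a) :
    a ^ α - b ^ α ≤ α * a ^ (α - 1) * (a - b) := by
  rcases hba.lt_or_eq with hlt | rfl
  · have h := (convexOn_rpow hα).slope_le_of_hasDerivAt hb (hb.trans hba) hlt
      (Real.hasDerivAt_rpow_const (Or.inr hα))
    rwa [slope_def_field, div_le_iff₀ (sub_pos.2 hlt)] at h
  · simp

lemma abs_signedRpow_sub_le_of_one_le {α : ℝ} (h1 : 1 ≤ α) (a b : ℝ) :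
    |signedRpow α a - signedRpow α b| ≤ α * (|a| + |b|) ^ (α - 1) * |a - b| := by
  have hα1 : 0 ≤ α - 1 := sub_nonneg.2 h1
  refine abs_signedRpow_sub_le (by linarith) (F := fun x y d => α * (x + y) ^ (α - 1) * d)
    (fun x y d => by rw [add_comm x]) (fun a b hb hba => ?_) (fun a b ha hb => ?_) a b
  · have ha : 0 ≤ a := hb.trans hba
    calc a ^ α - b ^ α ≤ α * a ^ (α - 1) * (a - b) := rpow_sub_rpow_le_mul_sub h1 hb hba
      _ ≤ α * (a + b) ^ (α - 1) * (a - b) := by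
        gcongr
        exact le_add_of_nonneg_right hb
  · calc a ^ α + b ^ α ≤ (a + b) ^ α := Real.add_rpow_le_rpow_add ha hb h1
      _ = 1 * (a + b) ^ (α - 1) * (a + b) := by
        rw [one_mul, ← Real.rpow_add_one' (add_nonneg ha hb) (by linarith), sub_add_cancel]
      _ ≤ α * (a + b) ^ (α - 1) * (a + b) := by gcongr

lemma abs_signedRpow_sub_le_max {α Θ ε : ℝ} (hΘ : 1 ≤ Θ) (hα0 : 0 < α) (hαΘ : α ≤ Θ)
    (hε0 : 0 < ε) (hε1 : ε ≤ 1) (a b : ℝ) :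
    |signedRpow α a - signedRpow α b| ≤
      max (Θ * (3 / ε) ^ Θ * |a - b| ^ α) (ε * (Θ * 3 ^ Θ) * |b| ^ α) := by
  have h3ε : 3 ≤ 3 / ε := le_div_self (by norm_num) hε0 hε1
  rcases le_or_gt α 1 with hα1 | hα1
  · refine le_max_of_le_left ((abs_signedRpow_sub_le_of_le_one hα0 hα1 a b).trans ?_)
    have : 3 ≤ (3 / ε) ^ Θ := h3ε.trans (Real.self_le_rpow_of_one_le (by linarith) hΘ)
    gcongr
    nlinarith
  have hmain := abs_signedRpow_sub_le_of_one_le hα1.le a b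
  have hscale : ∀ c e Z : ℝ, 1 ≤ c → 0 ≤ e → 0 ≤ Z → |a| + |b| ≤ c * Z → |a - b| ≤ e * Z →
      α * (|a| + |b|) ^ (α - 1) * |a - b| ≤ Θ * c ^ Θ * e * Z ^ α := by
    intro c e Z hc he hZ hM hD
    calc α * (|a| + |b|) ^ (α - 1) * |a - b| ≤ Θ * (c * Z) ^ (α - 1) * (e * Z) := by
          gcongr
      _ = Θ * c ^ (α - 1) * e * (Z ^ (α - 1) * Z) := by
          rw [Real.mul_rpow (by linarith) hZ]; ring
      _ ≤ Θ * c ^ Θ * e * Z ^ α := by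
          rw [← Real.rpow_add_one' hZ (by linarith), sub_add_cancel]
          gcongr
          linarith
  have hab : |a| + |b| ≤ |a - b| + 2 * |b| := by
    linarith [abs_sub_abs_le_abs_sub a b]
  rcases le_or_gt |a - b| (ε * |b|) with hsmall | hlarge
  · refine le_max_of_le_right (hmain.trans ?_)
    have hεb : ε * |b| ≤ |b| := mul_le_of_le_one_left (abs_nonneg _) hε1
    have := hscale 3 ε |b| (by norm_num) hε0.le (abs_nonneg _) (by linarith) hsmall
    linarith
  · refine le_max_of_le_left (hmain.trans ?_)
    have hb : |b| ≤ |a - b| / ε := by rw [le_div_iff₀ hε0]; linarith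
    have hd : |a - b| ≤ |a - b| / ε := le_div_self (abs_nonneg _) hε0 hε1
    have := hscale (3 / ε) 1 |a - b| (by linarith) zero_le_one (abs_nonneg _)
      (by linarith [show 3 / ε * |a - b| = |a - b| / ε + 2 * (|a - b| / ε) by ring]) (by linarith)
    linarith

lemma exists_abs_signedRpow_sub_rpow_le {β Θ δ : ℝ} (hβ : 0 < β) (hΘ : 1 ≤ Θ) (hδ : 0 < δ) :
    ∃ C : ℝ, 0 ≤ C ∧ ∀ α θ a b : ℝ, β ≤ α → α ≤ θ → θ ≤ Θ →
      |signedRpow α a - signedRpow α b| ^ (θ / α) ≤ C * |a - b| ^ θ + δ * |b| ^ θ := by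
  have hK : 1 ≤ Θ * 3 ^ Θ :=
    one_le_mul_of_one_le_of_one_le hΘ (Real.one_le_rpow (by norm_num) (by linarith))
  set ε := min 1 δ / (Θ * 3 ^ Θ)
  have hmin0 : 0 < min 1 δ := lt_min one_pos hδ
  have hε0 : 0 < ε := by positivity
  have hε1 : ε ≤ 1 := div_le_one_of_le₀ ((min_le_left _ _).trans hK) (by positivity)
  have hεK : ε * (Θ * 3 ^ Θ) = min 1 δ := div_mul_cancel₀ _ (by positivity)
  set L := Θ * (3 / ε) ^ Θ
  have hL : 1 ≤ L := one_le_mul_of_one_le_of_one_le hΘ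
    (Real.one_le_rpow (by rw [le_div_iff₀ hε0]; linarith) (by linarith))
  refine ⟨L ^ (Θ / β), by positivity, fun α θ a b hβα hαθ hθΘ => ?_⟩
  have hα0 : 0 < α := hβ.trans_le hβα
  have hp1 : 1 ≤ θ / α := (one_le_div hα0).2 hαθ
  have hpΘ : θ / α ≤ Θ / β := div_le_div₀ (by linarith) hθΘ hβ hβα
  have hpow : ∀ c Z : ℝ, 0 ≤ c → 0 ≤ Z → (c * Z ^ α) ^ (θ / α) = c ^ (θ / α) * Z ^ θ :=
    fun c Z hc hZ => by
      rw [Real.mul_rpow hc (Real.rpow_nonneg hZ _), ← Real.rpow_mul hZ, mul_div_cancel₀ _ hα0.ne']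
  have hmax := abs_signedRpow_sub_le_max hΘ hα0 (hαθ.trans hθΘ) hε0 hε1 a b
  rw [hεK] at hmax
  rcases le_max_iff.1 hmax with h | h
  · calc |signedRpow α a - signedRpow α b| ^ (θ / α) ≤ (L * |a - b| ^ α) ^ (θ / α) := by
          gcongr
      _ = L ^ (θ / α) * |a - b| ^ θ := hpow _ _ (by positivity) (abs_nonneg _)
      _ ≤ L ^ (Θ / β) * |a - b| ^ θ := by gcongr
      _ ≤ _ := le_add_of_nonneg_right (by positivity)
  · calc |signedRpow α a - signedRpow α b| ^ (θ / α) ≤ (min 1 δ * |b| ^ α) ^ (θ / α) := by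
          gcongr
      _ = min 1 δ ^ (θ / α) * |b| ^ θ := hpow _ _ hmin0.le (abs_nonneg _)
      _ ≤ δ * |b| ^ θ := by
          gcongr
          calc min 1 δ ^ (θ / α) ≤ min 1 δ ^ (1 : ℝ) :=
                Real.rpow_le_rpow_of_exponent_ge hmin0 (min_le_left _ _) hp1
            _ ≤ δ := by rw [Real.rpow_one]; exact min_le_right _ _
      _ ≤ _ := le_add_of_nonneg_left (by positivity)

lemma ENNReal.tendsto_nhds_zero_of_forall_le_mul_add {ι : Type*} {l : Filter ι}
    {f g : ι → ℝ≥0∞} {K : ℝ≥0∞} (hK : K ≠ ⊤) (hg : Tendsto g l (𝓝 0))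
    (h : ∀ δ : ℝ, 0 < δ → ∃ C : ℝ, ∀ i, f i ≤ ENNReal.ofReal C * g i + ENNReal.ofReal δ * K) :
    Tendsto f l (𝓝 0) := by
  refine ENNReal.tendsto_nhds_zero.2 fun ε hε => ?_
  have hδK : Tendsto (fun δ : ℝ => ENNReal.ofReal δ * K) (𝓝[>] 0) (𝓝 0) := by
    simpa using ENNReal.Tendsto.mul_const
      (ENNReal.tendsto_ofReal (tendsto_id.mono_left (nhdsWithin_le_nhds (a := (0 : ℝ)))))
      (Or.inr hK)
  obtain ⟨δ, hδε, hδ⟩ := ((hδK.eventually (gt_mem_nhds hε)).and self_mem_nhdsWithin).exists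
  obtain ⟨C, hC⟩ := h δ hδ
  have hlim : Tendsto (fun i => ENNReal.ofReal C * g i + ENNReal.ofReal δ * K) l
      (𝓝 (ENNReal.ofReal δ * K)) := by
    simpa using (ENNReal.Tendsto.const_mul hg (Or.inr ENNReal.ofReal_ne_top)).add_const _
  filter_upwards [hlim.eventually (gt_mem_nhds hδε)] with i hi
  exact (hC i).trans hi.le

lemma exists_pos_le_one_ofReal_rpow_le {β : ℝ} (hβ : 0 < β) {ε : ℝ≥0∞} (hε : 0 < ε) :
    ∃ m : ℝ, 0 < m ∧ m ≤ 1 ∧ ENNReal.ofReal (m ^ β) ≤ ε := by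
  have ht : Tendsto (fun m : ℝ => ENNReal.ofReal (m ^ β)) (𝓝[>] 0) (𝓝 0) := by
    simpa [Real.zero_rpow hβ.ne'] using ENNReal.tendsto_ofReal
      ((Real.continuousAt_rpow_const 0 β (Or.inr hβ.le)).tendsto.mono_left nhdsWithin_le_nhds)
  obtain ⟨m, hmε, hm⟩ := ((ht.eventually (ge_mem_nhds hε)).and (Ioc_mem_nhdsGT one_pos)).exists
  exact ⟨m, hm.1, hm.2, hmε⟩

section Modular

variable {X : Type*} [MeasurableSpace X] {μ : Measure X}

lemma isBoundedUnder_ge_of_essInf_ne_zero {f : X → ℝ} (h : essInf f μ ≠ 0) :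
    IsBoundedUnder (· ≥ ·) (ae μ) f := by
  by_contra hf
  -- An a.e. unbounded-below `f` has `essInf f μ = sSup ∅`, which is `0` in `ℝ`.
  refine h ?_
  rw [essInf, liminf_eq, Set.eq_empty_of_forall_notMem (s := {a | ∀ᶠ x in ae μ, a ≤ f x})
    fun a ha => hf ⟨a, ha⟩, Real.sSup_empty]

noncomputable def modular (μ : Measure X) (p v : X → ℝ) : ℝ≥0∞ :=
  ∫⁻ x, ENNReal.ofReal (|v x| ^ p x) ∂μ

lemma luxNorm_le_ofReal {p v : X → ℝ} {m : ℝ} (hm : 0 < m)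
    (h : modular μ p (fun x => v x / m) ≤ 1) : luxNorm μ p v ≤ ENNReal.ofReal m :=
  sInf_le ⟨m, ⟨hm, h⟩, rfl⟩

lemma exists_modular_div_le_one_of_luxNorm_lt {p v : X → ℝ} {c : ℝ≥0∞} (h : luxNorm μ p v < c) :
    ∃ m : ℝ, 0 < m ∧ ENNReal.ofReal m < c ∧ modular μ p (fun x => v x / m) ≤ 1 := by
  obtain ⟨_, ⟨m, ⟨hm, hmod⟩, rfl⟩, hmc⟩ := sInf_lt_iff.1 h
  exact ⟨m, hm, hmc, hmod⟩

lemma modular_const_mul_le {p v : X → ℝ} {c K : ℝ} (h : ∀ᵐ x ∂μ, |c| ^ p x ≤ K) :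
    modular μ p (fun x => c * v x) ≤ ENNReal.ofReal K * modular μ p v := by
  rw [modular, modular, ← lintegral_const_mul' _ _ ENNReal.ofReal_ne_top]
  refine lintegral_mono_ae (h.mono fun x hx => ?_)
  rw [← ENNReal.ofReal_mul ((Real.rpow_nonneg (abs_nonneg c) _).trans hx), abs_mul,
    Real.mul_rpow (abs_nonneg _) (abs_nonneg _)]
  exact ENNReal.ofReal_le_ofReal (mul_le_mul_of_nonneg_right hx (by positivity))

lemma modular_eq_const_mul_div (p v : X → ℝ) {m : ℝ} (hm : m ≠ 0) :
    modular μ p v = modular μ p (fun x => m * (v x / m)) := by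
  simp_rw [mul_div_cancel₀ _ hm]

lemma modular_lt_top_of_luxNorm_lt_top {p v : X → ℝ} {P : ℝ} (hp0 : ∀ᵐ x ∂μ, 0 ≤ p x)
    (hpP : ∀ᵐ x ∂μ, p x ≤ P) (h : luxNorm μ p v < ⊤) : modular μ p v < ⊤ := by
  obtain ⟨m, hm, -, hmod⟩ := exists_modular_div_le_one_of_luxNorm_lt h
  have hbound : ∀ᵐ x ∂μ, |m| ^ p x ≤ max 1 m ^ P := by
    filter_upwards [hp0, hpP] with x hx0 hxP
    rw [abs_of_pos hm]
    exact (Real.rpow_le_rpow hm.le (le_max_right 1 m) hx0).trans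
      (Real.rpow_le_rpow_of_exponent_le (le_max_left 1 m) hxP)
  calc modular μ p v ≤ ENNReal.ofReal (max 1 m ^ P) * modular μ p (fun x => v x / m) := by
        rw [modular_eq_const_mul_div p v hm.ne']
        exact modular_const_mul_le hbound
    _ ≤ ENNReal.ofReal (max 1 m ^ P) * 1 := by gcongr
    _ < ⊤ := by simp

lemma tendsto_modular_of_tendsto_luxNorm {ι : Type*} {l : Filter ι} {p : X → ℝ}
    {v : ι → X → ℝ} {β : ℝ} (hβ : 0 < β) (hp : ∀ᵐ x ∂μ, β ≤ p x)
    (h : Tendsto (fun i => luxNorm μ p (v i)) l (𝓝 0)) :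
    Tendsto (fun i => modular μ p (v i)) l (𝓝 0) := by
  refine ENNReal.tendsto_nhds_zero.2 fun ε hε => ?_
  obtain ⟨m₀, hm₀, hm₀1, hm₀ε⟩ := exists_pos_le_one_ofReal_rpow_le hβ hε
  filter_upwards [h.eventually (gt_mem_nhds (ENNReal.ofReal_pos.2 hm₀))] with i hi
  obtain ⟨m, hm, hmm₀, hmod⟩ := exists_modular_div_le_one_of_luxNorm_lt hi
  rw [ENNReal.ofReal_lt_ofReal_iff hm₀] at hmm₀
  have hbound : ∀ᵐ x ∂μ, |m| ^ p x ≤ m ^ β := hp.mono fun x hx => by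
    rw [abs_of_pos hm]
    exact Real.rpow_le_rpow_of_exponent_ge hm (hmm₀.le.trans hm₀1) hx
  calc modular μ p (v i) ≤ ENNReal.ofReal (m ^ β) * modular μ p (fun x => v i x / m) := by
        rw [modular_eq_const_mul_div p (v i) hm.ne']
        exact modular_const_mul_le hbound
    _ ≤ ENNReal.ofReal (m₀ ^ β) * 1 := by gcongr
    _ ≤ ε := by rwa [mul_one]

lemma tendsto_luxNorm_of_tendsto_modular {ι : Type*} {l : Filter ι} {p : X → ℝ}
    {v : ι → X → ℝ} {P : ℝ} (hpP : ∀ᵐ x ∂μ, p x ≤ P)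
    (h : Tendsto (fun i => modular μ p (v i)) l (𝓝 0)) :
    Tendsto (fun i => luxNorm μ p (v i)) l (𝓝 0) := by
  refine ENNReal.tendsto_nhds_zero.2 fun ε hε => ?_
  obtain ⟨r, hr, hr1, hrε⟩ := exists_pos_le_one_ofReal_rpow_le one_pos hε
  rw [Real.rpow_one] at hrε
  have hrP : 0 < ENNReal.ofReal (r ^ P) := ENNReal.ofReal_pos.2 (Real.rpow_pos_of_pos hr _)
  filter_upwards [h.eventually (ge_mem_nhds hrP)] with i hi
  refine (luxNorm_le_ofReal hr ?_).trans hrε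
  have hbound : ∀ᵐ x ∂μ, |r⁻¹| ^ p x ≤ r⁻¹ ^ P := hpP.mono fun x hx => by
    rw [abs_of_pos (inv_pos.2 hr)]
    exact Real.rpow_le_rpow_of_exponent_le (one_le_inv₀ hr |>.2 hr1) hx
  calc modular μ p (fun x => v i x / r) ≤ ENNReal.ofReal (r⁻¹ ^ P) * modular μ p (v i) := by
        simp_rw [div_eq_inv_mul]
        exact modular_const_mul_le hbound
    _ ≤ ENNReal.ofReal (r⁻¹ ^ P) * ENNReal.ofReal (r ^ P) := by gcongr
    _ = 1 := by
        rw [← ENNReal.ofReal_mul (by positivity), Real.inv_rpow hr.le,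
          inv_mul_cancel₀ (Real.rpow_pos_of_pos hr _).ne', ENNReal.ofReal_one]

lemma modular_le_of_ae_le {r p w v u : X → ℝ} {C δ : ℝ} (hC : 0 ≤ C) (hδ : 0 ≤ δ)
    (hp : Measurable p) (hv : Measurable v)
    (h : ∀ᵐ x ∂μ, |w x| ^ r x ≤ C * |v x| ^ p x + δ * |u x| ^ p x) :
    modular μ r w ≤ ENNReal.ofReal C * modular μ p v + ENNReal.ofReal δ * modular μ p u := by
  rw [modular, modular, modular, ← lintegral_const_mul' _ _ ENNReal.ofReal_ne_top,
    ← lintegral_const_mul' _ _ ENNReal.ofReal_ne_top,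
    ← lintegral_add_left ((hv.abs.pow hp).ennreal_ofReal.const_mul _)]
  refine lintegral_mono_ae (h.mono fun x hx => ?_)
  rw [← ENNReal.ofReal_mul hC, ← ENNReal.ofReal_mul hδ,
    ← ENNReal.ofReal_add (by positivity) (by positivity)]
  exact ENNReal.ofReal_le_ofReal hx

end Modular

theorem nemytskii_convergence_general
    {N : ℕ} (Ω : Set (Fin N → ℝ))
    (q θ : (Fin N → ℝ) → ℝ) (hθ : Measurable θ)
    (hqm : 1 < essInf q (volume.restrict Ω))
    (hθM : ∃ C : ℝ, ∀ᵐ x ∂(volume.restrict Ω), θ x ≤ C)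
    (hqθ : ∀ᵐ x ∂(volume.restrict Ω), q x - 1 ≤ θ x)
    (u : (Fin N → ℝ) → ℝ) (hu : Measurable u)
    (hufin : luxNorm (volume.restrict Ω) θ u < ⊤)
    (un : ℕ → (Fin N → ℝ) → ℝ) (hun : ∀ n, Measurable (un n))
    (hconv : Tendsto (fun n => luxNorm (volume.restrict Ω) θ (fun x => un n x - u x))
      atTop (𝓝 0)) :
    Tendsto (fun n => luxNorm (volume.restrict Ω) (fun x => θ x / (q x - 1))
        (fun x => powMap (q x) (un n x) - powMap (q x) (u x))) atTop (𝓝 0) := by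
  obtain ⟨Θ₀, hθΘ₀⟩ := hθM
  set Θ := max Θ₀ 1
  set β := essInf q (volume.restrict Ω) - 1
  have hβ : 0 < β := sub_pos.2 hqm
  have hqβ : ∀ᵐ x ∂(volume.restrict Ω), β ≤ q x - 1 :=
    (ae_essInf_le (isBoundedUnder_ge_of_essInf_ne_zero (one_pos.trans hqm).ne')).mono
      fun x hx => by linarith
  have hθβ : ∀ᵐ x ∂(volume.restrict Ω), β ≤ θ x := by
    filter_upwards [hqβ, hqθ] with x h1 h2 using h1.trans h2
  have hθΘ : ∀ᵐ x ∂(volume.restrict Ω), θ x ≤ Θ :=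
    hθΘ₀.mono fun x hx => hx.trans (le_max_left _ _)
  have hdiff := tendsto_modular_of_tendsto_luxNorm hβ hθβ hconv
  have hu_mod := modular_lt_top_of_luxNorm_lt_top (hθβ.mono fun x hx => hβ.le.trans hx) hθΘ hufin
  refine tendsto_luxNorm_of_tendsto_modular (P := Θ / β) ?_
    (ENNReal.tendsto_nhds_zero_of_forall_le_mul_add hu_mod.ne hdiff fun δ hδ => ?_)
  · filter_upwards [hqβ, hqθ, hθΘ] with x h1 h2 h3
    exact div_le_div₀ (by positivity) h3 hβ h1
  obtain ⟨C, hC0, hC⟩ := exists_abs_signedRpow_sub_rpow_le hβ (le_max_right Θ₀ 1) hδ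
  refine ⟨C, fun n => modular_le_of_ae_le hC0 hδ.le hθ ((hun n).sub hu) ?_⟩
  filter_upwards [hqβ, hqθ, hθΘ] with x h1 h2 h3
  simpa only [powMap_eq_signedRpow] using hC _ _ (un n x) (u x) h1 h2 h3

/-- Continuity of the Nemytskii map `u ↦ |u|^{q(·)−2}u` from `L^{θ(·)}` into
`L^{θ(·)/(q(·)−1)}`: if `|u_n − u|_{θ(·)} → 0` then
`| |u_n|^{q(·)−2}u_n − |u|^{q(·)−2}u |_{θ(·)/(q(·)−1)} → 0`. -/
theorem nemytskii_convergence
    {N : ℕ} (hN : 1 ≤ N) (Ω : Set (Fin N → ℝ)) (hΩ : MeasurableSet Ω)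
    (q θ : (Fin N → ℝ) → ℝ) (hq : Measurable q) (hθ : Measurable θ)
    (hqm : 1 < essInf q (volume.restrict Ω))
    (hqM : ∃ C : ℝ, ∀ᵐ x ∂(volume.restrict Ω), q x ≤ C)
    (hθM : ∃ C : ℝ, ∀ᵐ x ∂(volume.restrict Ω), θ x ≤ C)
    (hqθ : ∀ᵐ x ∂(volume.restrict Ω), q x - 1 ≤ θ x)
    (u : (Fin N → ℝ) → ℝ) (hu : Measurable u)
    (hufin : luxNorm (volume.restrict Ω) θ u < ⊤)
    (un : ℕ → (Fin N → ℝ) → ℝ) (hun : ∀ n, Measurable (un n))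
    (hunfin : ∀ n, luxNorm (volume.restrict Ω) θ (un n) < ⊤)
    (hconv : Tendsto (fun n => luxNorm (volume.restrict Ω) θ (fun x => un n x - u x))
      atTop (𝓝 0)) :
    Tendsto (fun n => luxNorm (volume.restrict Ω) (fun x => θ x / (q x - 1))
        (fun x => powMap (q x) (un n x) - powMap (q x) (u x))) atTop (𝓝 0) :=
  nemytskii_convergence_general Ω q θ hθ hqm hθM hqθ u hu hufin un hun hconv
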